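/- Let p > 2 and r_α(x) = (1/(2π)) ∫_{−1}^{1} (V_α'(t) − V_α'(x))/(t−x) dt/√(1−t²), where V_α(x) = α c_p |x|^p + 2(1−α)x². There exist constants C, c > 0 such that for all α ∈ [0,1] and all x ∈ ℝ: c(1 + α|x|^{p−2}) ≤ r_α(x) ≤ C(1 + α|x|^{p−2}). -/

import Mathlib

open MeasureTheory

/-- `c_p = Γ(p/2)Γ(1/2)/Γ((p+1)/2)`. -/
noncomputable def cp (p : ℝ) : ℝ :=
  Real.Gamma (p / 2) * Real.Gamma (1 / 2) / Real.Gamma ((p + 1) / 2)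

/-- The interpolating potential `V_α(x) = α c_p |x|^p + 2(1−α)x²`. -/
noncomputable def Valpha (p α : ℝ) : ℝ → ℝ :=
  fun x => α * cp p * |x| ^ p + 2 * (1 - α) * x ^ 2

/-- `r_α(x) = (1/(2π)) ∫_{−1}^{1} (V_α'(t) − V_α'(x))/(t−x) · dt/√(1−t²)`. -/
noncomputable def ralpha (p α x : ℝ) : ℝ :=
  1 / (2 * Real.pi) *
    ∫ t in (-1 : ℝ)..1,
      (deriv (Valpha p α) t - deriv (Valpha p α) x) / (t - x) / Real.sqrt (1 - t ^ 2)

/-!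
Since `V_α'(u) = α p c_p g(u) + 4(1 - α) u` with `g(u) = u |u|^(p-2)` (`oddPow p`), one has
`r_α(x) = α (p c_p / 2π) J(x) + 2(1 - α)`, where `J(x)` (`slopeIntegral p x`) integrates the
difference quotients of `g` at `x` against the arcsine weight `1/√(1-t²)` of total mass `π`.
By the mean value theorem these quotients are `(p-1)|c|^(p-2)` with `|c| ≤ max 1 |x|`, so
`J(x) ≤ π (p-1) (1 + |x|^(p-2))`. For the lower bound only the `t` with `1/2 ≤ |t|` of sign
opposite to `x` are kept: there the quotient is `(|t|^(p-1) + |x|^(p-1)) / (|t| + |x|)`, which is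
of order `1 + |x|^(p-2)`.
-/

open Real Set Filter Topology

lemma cp_pos {p : ℝ} (hp : 0 < p) : 0 < cp p := by
  unfold cp
  have := Gamma_pos_of_pos (half_pos hp)
  have := Gamma_pos_of_pos (one_half_pos (α := ℝ))
  have := Gamma_pos_of_pos (half_pos (by linarith : 0 < p + 1))
  positivity

noncomputable def oddPow (p u : ℝ) : ℝ := u * |u| ^ (p - 2)

section OddPow

variable {p : ℝ}

lemma oddPow_neg (p u : ℝ) : oddPow p (-u) = -oddPow p u := by
  simp [oddPow]

lemma hasDerivAt_oddPow (hp : 2 < p) (u : ℝ) :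
    HasDerivAt (oddPow p) ((p - 1) * |u| ^ (p - 2)) u := by
  rcases eq_or_ne u 0 with rfl | hu
  · have hlim : Tendsto (fun v : ℝ => |v| ^ (p - 2)) (𝓝[≠] 0) (𝓝 0) := by
      have := (continuous_abs.rpow_const (p := p - 2) fun _ => Or.inr (by linarith)).tendsto 0
      simpa [zero_rpow (by linarith : p - 2 ≠ 0)] using this.mono_left nhdsWithin_le_nhds
    rw [hasDerivAt_iff_tendsto_slope, abs_zero, zero_rpow (by linarith), mul_zero]
    refine hlim.congr' (eventually_nhdsWithin_of_forall fun v (hv : v ≠ 0) => ?_)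
    simp [slope_def_field, oddPow, hv]
  · have h : HasDerivAt (oddPow p)
        (1 * |u| ^ (p - 2) + u * (SignType.sign u * (p - 2) * |u| ^ (p - 2 - 1))) u :=
      (hasDerivAt_id' u).mul
        ((hasDerivAt_abs hu).rpow_const (p := p - 2) (Or.inl (abs_ne_zero.2 hu)))
    refine h.congr_deriv ?_
    have : |u| ^ (p - 2 - 1) * |u| = |u| ^ (p - 2) := by
      rw [← rpow_add_one (abs_ne_zero.2 hu)]; ring_nf
    rw [← this]
    linear_combination (p - 2) * |u| ^ (p - 2 - 1) * self_mul_sign u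

lemma continuous_oddPow (hp : 2 < p) : Continuous (oddPow p) :=
  continuous_iff_continuousAt.2 fun u => (hasDerivAt_oddPow hp u).continuousAt

lemma exists_slope_oddPow_eq (hp : 2 < p) {t x : ℝ} (htx : t ≠ x) :
    ∃ c, |c| ≤ max |t| |x| ∧ slope (oddPow p) x t = (p - 1) * |c| ^ (p - 2) := by
  wlog hlt : x < t generalizing t x
  · obtain ⟨c, hc, hslope⟩ := this htx.symm (htx.lt_or_gt.resolve_right hlt)
    exact ⟨c, max_comm |t| |x| ▸ hc, slope_comm (oddPow p) x t ▸ hslope⟩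
  obtain ⟨c, hc, hderiv⟩ := exists_hasDerivAt_eq_slope (oddPow p) _ hlt
    (continuous_oddPow hp).continuousOn fun u _ => hasDerivAt_oddPow hp u
  exact ⟨c, abs_le_max_abs_abs hc.1.le hc.2.le |>.trans_eq (max_comm _ _),
    by rw [slope_def_field, hderiv]⟩

lemma slope_oddPow_nonneg (hp : 2 < p) (x t : ℝ) : 0 ≤ slope (oddPow p) x t := by
  rcases eq_or_ne t x with rfl | htx
  · simp
  obtain ⟨c, -, hslope⟩ := exists_slope_oddPow_eq hp htx
  rw [hslope]
  exact mul_nonneg (by linarith) (by positivity)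

lemma slope_oddPow_le (hp : 2 < p) (x : ℝ) {t : ℝ} (ht : |t| ≤ 1) :
    slope (oddPow p) x t ≤ (p - 1) * (1 + |x| ^ (p - 2)) := by
  have hx : 0 ≤ |x| ^ (p - 2) := by positivity
  rcases eq_or_ne t x with rfl | htx
  · simp only [slope_same]; nlinarith
  obtain ⟨c, hc, hslope⟩ := exists_slope_oddPow_eq hp htx
  have hc : |c| ^ (p - 2) ≤ 1 + |x| ^ (p - 2) := by
    have h := rpow_le_rpow (abs_nonneg c) (hc.trans (max_le_max_right |x| ht))
      (by linarith : 0 ≤ p - 2)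
    rcases max_choice 1 |x| with h1 | h1 <;> rw [h1] at h
    · rw [one_rpow] at h; linarith
    · linarith
  rw [hslope]
  exact mul_le_mul_of_nonneg_left hc (by linarith)

lemma slope_oddPow_neg (p x t : ℝ) : slope (oddPow p) (-x) (-t) = slope (oddPow p) x t := by
  simp only [slope_def_field, oddPow_neg]
  rw [← neg_div_neg_eq]; ring_nf

lemma slope_oddPow_ge (hp : 2 ≤ p) {x t : ℝ} (hxt : t * x ≤ 0) (ht : 1 / 2 ≤ |t|)
    (ht1 : |t| ≤ 1) : (1 / 2) ^ (p - 2) / 8 * (1 + |x| ^ (p - 2)) ≤ slope (oddPow p) x t := by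
  wlog ht0 : t ≤ 0 generalizing x t
  · simpa [slope_oddPow_neg] using
      this (x := -x) (t := -t) (by linarith) (by rwa [abs_neg]) (by rwa [abs_neg]) (by linarith)
  have hx : 0 ≤ x := by
    by_contra! hx
    nlinarith [abs_of_nonpos ht0]
  have hq : 0 ≤ p - 2 := by linarith
  have hoddt : oddPow p t = -(|t| * |t| ^ (p - 2)) := by
    have hta : t = -|t| := by rw [abs_of_nonpos ht0, neg_neg]
    rw [oddPow]
    nth_rewrite 1 [hta]
    ring
  have hslope : slope (oddPow p) x t = (|t| * |t| ^ (p - 2) + x * x ^ (p - 2)) / (x + |t|) := by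
    rw [slope_def_field, hoddt, oddPow, abs_of_nonneg hx, abs_of_nonpos ht0, ← neg_div_neg_eq]
    ring_nf
  set e : ℝ := (1 / 2) ^ (p - 2)
  have he : e ≤ |t| ^ (p - 2) := rpow_le_rpow (by norm_num) ht hq
  have he1 : e ≤ 1 := rpow_le_one (by norm_num) (by norm_num) hq
  have hy0 : 0 ≤ x ^ (p - 2) := by positivity
  rw [hslope, le_div_iff₀ (by linarith), abs_of_nonneg hx]
  rcases le_total x 1 with hx1 | hx1
  · have hy : x ^ (p - 2) ≤ 1 := rpow_le_one hx hx1 hq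
    calc e / 8 * (1 + x ^ (p - 2)) * (x + |t|) ≤ e / 8 * (1 + 1) * (1 + 1) := by gcongr
      _ = 1 / 2 * e := by ring
      _ ≤ |t| * |t| ^ (p - 2) := by gcongr
      _ ≤ _ := le_add_of_nonneg_right (by positivity)
  · have hy : 1 ≤ x ^ (p - 2) := one_le_rpow hx1 hq
    calc e / 8 * (1 + x ^ (p - 2)) * (x + |t|)
        ≤ 1 / 8 * (x ^ (p - 2) + x ^ (p - 2)) * (x + x) := by gcongr; linarith
      _ ≤ |t| * |t| ^ (p - 2) + x * x ^ (p - 2) := by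
        nlinarith [mul_nonneg (abs_nonneg t) (le_trans (by positivity) he), mul_nonneg hx hy0]

end OddPow

section ArcsineWeight

lemma integrableOn_one_div_sqrt_one_sub_sq :
    IntegrableOn (fun t : ℝ => 1 / √(1 - t ^ 2)) (Ioc (-1) 1) :=
  intervalIntegral.integrableOn_deriv_of_nonneg continuous_arcsin.continuousOn
    (fun t ht => hasDerivAt_arcsin ht.1.ne' ht.2.ne) fun t _ => by positivity

lemma intervalIntegrable_one_div_sqrt_one_sub_sq :
    IntervalIntegrable (fun t : ℝ => 1 / √(1 - t ^ 2)) volume (-1) 1 :=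
  (intervalIntegrable_iff_integrableOn_Ioc_of_le (by norm_num)).2
    integrableOn_one_div_sqrt_one_sub_sq

lemma integral_one_div_sqrt_one_sub_sq : ∫ t in (-1 : ℝ)..1, 1 / √(1 - t ^ 2) = π := by
  rw [intervalIntegral.integral_eq_sub_of_hasDerivAt_of_le (by norm_num)
    continuous_arcsin.continuousOn (fun t ht => hasDerivAt_arcsin ht.1.ne' ht.2.ne)
    intervalIntegrable_one_div_sqrt_one_sub_sq, arcsin_one, arcsin_neg_one]
  ring

lemma intervalIntegrable_div_sqrt_one_sub_sq {f : ℝ → ℝ} {M : ℝ} (hf : Measurable f)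
    (hM : ∀ t ∈ Icc (-1 : ℝ) 1, |f t| ≤ M) :
    IntervalIntegrable (fun t => f t / √(1 - t ^ 2)) volume (-1) 1 := by
  simp only [div_eq_mul_one_div (f _)]
  rw [intervalIntegrable_iff_integrableOn_Ioc_of_le (by norm_num)]
  exact Integrable.bdd_mul integrableOn_one_div_sqrt_one_sub_sq hf.aestronglyMeasurable
    (ae_restrict_of_forall_mem measurableSet_Ioc fun t ht => hM t (Ioc_subset_Icc_self ht))

end ArcsineWeight

noncomputable def slopeIntegral (p x : ℝ) : ℝ :=
  ∫ t in (-1 : ℝ)..1, slope (oddPow p) x t / √(1 - t ^ 2)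

section SlopeIntegral

variable {p : ℝ}

lemma intervalIntegrable_slope_oddPow (hp : 2 < p) (x : ℝ) :
    IntervalIntegrable (fun t => slope (oddPow p) x t / √(1 - t ^ 2)) volume (-1) 1 := by
  refine intervalIntegrable_div_sqrt_one_sub_sq (M := (p - 1) * (1 + |x| ^ (p - 2))) ?_
    fun t ht => ?_
  · have := (continuous_oddPow hp).measurable
    unfold slope
    fun_prop
  · rw [abs_of_nonneg (slope_oddPow_nonneg hp x t)]
    exact slope_oddPow_le hp x (abs_le.2 ht)

lemma slopeIntegral_le (hp : 2 < p) (x : ℝ) :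
    slopeIntegral p x ≤ (p - 1) * (1 + |x| ^ (p - 2)) * π := by
  rw [← integral_one_div_sqrt_one_sub_sq, ← intervalIntegral.integral_const_mul]
  refine intervalIntegral.integral_mono_on (by norm_num) (intervalIntegrable_slope_oddPow hp x)
    (intervalIntegrable_one_div_sqrt_one_sub_sq.const_mul _) fun t ht => ?_
  rw [← div_eq_mul_one_div]
  exact div_le_div_of_nonneg_right (slope_oddPow_le hp x (abs_le.2 ht)) (sqrt_nonneg _)

lemma slopeIntegral_ge (hp : 2 < p) (x : ℝ) :
    (1 / 2) ^ (p - 2) / 16 * (1 + |x| ^ (p - 2)) ≤ slopeIntegral p x := by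
  obtain ⟨a, ha, ha1, hmem⟩ : ∃ a, -1 ≤ a ∧ a + 1 / 2 ≤ 1 ∧
      ∀ t ∈ Icc a (a + 1 / 2), t * x ≤ 0 ∧ 1 / 2 ≤ |t| ∧ |t| ≤ 1 := by
    rcases le_total 0 x with hx | hx
    · refine ⟨-1, by norm_num, by norm_num, fun t ht => ⟨?_, ?_, ?_⟩⟩
      · nlinarith [ht.2]
      · exact le_abs.2 (Or.inr (by linarith [ht.2]))
      · exact abs_le.2 ⟨ht.1, by linarith [ht.2]⟩
    · refine ⟨1 / 2, by norm_num, by norm_num, fun t ht => ⟨?_, ?_, ?_⟩⟩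
      · nlinarith [ht.1]
      · exact le_abs.2 (Or.inl ht.1)
      · exact abs_le.2 ⟨by linarith [ht.1], by linarith [ht.2]⟩
  have hint := intervalIntegrable_slope_oddPow hp x
  calc (1 / 2) ^ (p - 2) / 16 * (1 + |x| ^ (p - 2))
      = ∫ _ in a..a + 1 / 2, (1 / 2) ^ (p - 2) / 8 * (1 + |x| ^ (p - 2)) := by
        rw [intervalIntegral.integral_const, smul_eq_mul]; ring
    _ ≤ ∫ t in a..a + 1 / 2, slope (oddPow p) x t / √(1 - t ^ 2) := by
        refine intervalIntegral.integral_mono_on_of_le_Ioo (by linarith) intervalIntegrable_const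
          (hint.mono_set ?_) fun t ht => ?_
        · rw [uIcc_of_le (by linarith), uIcc_of_le (by norm_num)]
          exact Icc_subset_Icc ha ha1
        obtain ⟨htx, hth, ht1⟩ := hmem t (Ioo_subset_Icc_self ht)
        have hsq : 0 < 1 - t ^ 2 := by nlinarith [ht.1, ht.2]
        exact (slope_oddPow_ge hp.le htx hth ht1).trans (le_div_self
          (slope_oddPow_nonneg hp x t) (sqrt_pos.2 hsq) (sqrt_le_one.2 (by nlinarith)))
    _ ≤ slopeIntegral p x :=
        intervalIntegral.integral_mono_interval ha (by linarith) ha1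
          (ae_of_all _ fun t => div_nonneg (slope_oddPow_nonneg hp x t) (sqrt_nonneg _)) hint

end SlopeIntegral

lemma deriv_Valpha {p : ℝ} (hp : 1 < p) (α x : ℝ) :
    deriv (Valpha p α) x = α * (p * cp p) * oddPow p x + 4 * (1 - α) * x := by
  refine (((hasDerivAt_abs_rpow x hp).const_mul (α * cp p)).add
    ((hasDerivAt_pow 2 x).const_mul (2 * (1 - α)))).deriv.trans ?_
  simp only [oddPow]
  ring

lemma ralpha_eq {p : ℝ} (hp : 2 < p) (α x : ℝ) :
    ralpha p α x = α * (p * cp p / (2 * π) * slopeIntegral p x) + (1 - α) * 2 := by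
  have hsplit : ∀ t ≠ x,
      (deriv (Valpha p α) t - deriv (Valpha p α) x) / (t - x) / √(1 - t ^ 2) =
        α * (p * cp p) * (slope (oddPow p) x t / √(1 - t ^ 2)) +
          4 * (1 - α) * (1 / √(1 - t ^ 2)) := by
    intro t htx
    have : t - x ≠ 0 := sub_ne_zero.2 htx
    rw [deriv_Valpha (by linarith), deriv_Valpha (by linarith), slope_def_field]
    field_simp
    ring
  rw [ralpha, intervalIntegral.integral_congr_ae
      ((Measure.ae_ne volume x).mono fun t htx _ => hsplit t htx),
    intervalIntegral.integral_add ((intervalIntegrable_slope_oddPow hp x).const_mul _)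
      (intervalIntegrable_one_div_sqrt_one_sub_sq.const_mul _),
    intervalIntegral.integral_const_mul, intervalIntegral.integral_const_mul,
    integral_one_div_sqrt_one_sub_sq, ← slopeIntegral]
  field_simp
  ring

lemma mul_one_add_mul_le_convex_comb {α y a b c : ℝ} (hα : α ∈ Icc (0 : ℝ) 1)
    (ha : c * (1 + y) ≤ a) (hb : c ≤ b) : c * (1 + α * y) ≤ α * a + (1 - α) * b := by
  have : 0 ≤ 1 - α := by linarith [hα.2]
  calc c * (1 + α * y) = α * (c * (1 + y)) + (1 - α) * c := by ring
    _ ≤ α * a + (1 - α) * b := by gcongr; exact hα.1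

lemma convex_comb_le_mul_one_add_mul {α y a b C : ℝ} (hα : α ∈ Icc (0 : ℝ) 1)
    (ha : a ≤ C * (1 + y)) (hb : b ≤ C) : α * a + (1 - α) * b ≤ C * (1 + α * y) := by
  have : 0 ≤ 1 - α := by linarith [hα.2]
  calc α * a + (1 - α) * b ≤ α * (C * (1 + y)) + (1 - α) * C := by gcongr; exact hα.1
    _ = C * (1 + α * y) := by ring

/-- For `p > 2` there exist `C, c > 0` such that for all `α ∈ [0,1]` and `x ∈ ℝ`:
`c(1 + α|x|^{p−2}) ≤ r_α(x) ≤ C(1 + α|x|^{p−2})`. -/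
theorem stmt14 (p : ℝ) (hp : 2 < p) :
    ∃ C > 0, ∃ c > 0, ∀ α ∈ Set.Icc (0 : ℝ) 1, ∀ x : ℝ,
      c * (1 + α * |x| ^ (p - 2)) ≤ ralpha p α x ∧
      ralpha p α x ≤ C * (1 + α * |x| ^ (p - 2)) := by
  have hK : 0 < p * cp p := mul_pos (by linarith) (cp_pos (by linarith))
  set K := p * cp p
  refine ⟨max (K * (p - 1) / 2) 2, by positivity,
    min (K * (1 / 2) ^ (p - 2) / (32 * π)) 2, by positivity, fun α hα x => ?_⟩
  rw [ralpha_eq hp]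
  refine ⟨mul_one_add_mul_le_convex_comb hα ?_ (min_le_right _ _),
    convex_comb_le_mul_one_add_mul hα ?_ (le_max_right _ _)⟩
  · calc min (K * (1 / 2) ^ (p - 2) / (32 * π)) 2 * (1 + |x| ^ (p - 2))
        ≤ K * (1 / 2) ^ (p - 2) / (32 * π) * (1 + |x| ^ (p - 2)) := by
          gcongr; exact min_le_left _ _
      _ = K / (2 * π) * ((1 / 2) ^ (p - 2) / 16 * (1 + |x| ^ (p - 2))) := by field_simp; ring
      _ ≤ K / (2 * π) * slopeIntegral p x := by gcongr; exact slopeIntegral_ge hp x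
  · calc K / (2 * π) * slopeIntegral p x
        ≤ K / (2 * π) * ((p - 1) * (1 + |x| ^ (p - 2)) * π) := by
          gcongr; exact slopeIntegral_le hp x
      _ = K * (p - 1) / 2 * (1 + |x| ^ (p - 2)) := by field_simp
      _ ≤ max (K * (p - 1) / 2) 2 * (1 + |x| ^ (p - 2)) := by gcongr; exact le_max_left _ _
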